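/- The direct product monoid A^1 × B^1 satisfies the identity x·y²·t·x·s·y ≈ (x·y)²·t·x·s·y, where B^1 is the dual (opposite) monoid of A^1. -/

import Mathlib

/-- The semigroup A = {0,a,b,c,d,e}. -/
inductive Asg | z | a | b | c | d | e
deriving DecidableEq

instance : Fintype Asg :=
  ⟨⟨↑[Asg.z, Asg.a, Asg.b, Asg.c, Asg.d, Asg.e], by decide⟩, fun x => by cases x <;> decide⟩

namespace Asg
def mul : Asg → Asg → Asg
  | .a, .e => .a
  | .b, .e => .b
  | .c, .b => .a
  | .c, .d => .c
  | .d, .b => .b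
  | .d, .d => .d
  | .e, .a => .a
  | .e, .b => .a
  | .e, .c => .c
  | .e, .d => .c
  | .e, .e => .e
  | _, _ => .z
end Asg

/-- The monoid A¹ obtained by adjoining an identity to A. -/
inductive A1 | z | a | b | c | d | e | one
deriving DecidableEq

instance : Fintype A1 :=
  ⟨⟨↑[A1.z, A1.a, A1.b, A1.c, A1.d, A1.e, A1.one], by decide⟩, fun x => by cases x <;> decide⟩

namespace A1
def mul : A1 → A1 → A1
  | .one, x => x
  | x, .one => x
  | .a, .e => .a
  | .b, .e => .b
  | .c, .b => .a
  | .c, .d => .c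
  | .d, .b => .b
  | .d, .d => .d
  | .e, .a => .a
  | .e, .b => .a
  | .e, .c => .c
  | .e, .d => .c
  | .e, .e => .e
  | _, _ => .z

instance : Mul A1 := ⟨A1.mul⟩
instance : One A1 := ⟨A1.one⟩

instance : Monoid A1 where
  mul_assoc := by decide
  one_mul := by decide
  mul_one := by decide
end A1

/-!
Identities are inherited by direct products, and an identity holds in the opposite monoid exactly
when its mirror image (both sides read backwards) holds in the monoid itself. So it suffices to
check the identity and its mirror image in the seven-element monoid `A1`, which is a finite
computation.
-/

def SatisfiesIdentity (M : Type*) [Monoid M] : Prop :=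
  ∀ x y t s : M, x * y ^ 2 * t * x * s * y = (x * y) ^ 2 * t * x * s * y

theorem SatisfiesIdentity.prod {M N : Type*} [Monoid M] [Monoid N]
    (hM : SatisfiesIdentity M) (hN : SatisfiesIdentity N) : SatisfiesIdentity (M × N) :=
  fun x y t s => Prod.ext (by simpa using hM x.1 y.1 t.1 s.1) (by simpa using hN x.2 y.2 t.2 s.2)

theorem satisfiesIdentity_mulOpposite_iff {M : Type*} [Monoid M] :
    SatisfiesIdentity Mᵐᵒᵖ ↔
      ∀ x y t s : M, y * s * x * t * y ^ 2 * x = y * s * x * t * (y * x) ^ 2 := by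
  constructor
  · intro h x y t s
    simpa [mul_assoc] using congrArg MulOpposite.unop (h (.op x) (.op y) (.op t) (.op s))
  · intro h x y t s
    apply MulOpposite.unop_injective
    simpa [mul_assoc] using h x.unop y.unop t.unop s.unop

theorem A1.satisfiesIdentity : SatisfiesIdentity A1 := by
  unfold SatisfiesIdentity
  decide

theorem A1.satisfiesIdentity_mulOpposite : SatisfiesIdentity A1ᵐᵒᵖ :=
  satisfiesIdentity_mulOpposite_iff.2 (by decide)

/-- A¹ × B¹ satisfies the identity xy²txsy ≈ (xy)²txsy, where B¹ = (A¹)ᵒᵖ. -/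
theorem prod_satisfies :
    ∀ x y t s : A1 × A1ᵐᵒᵖ,
      x * y ^ 2 * t * x * s * y = (x * y) ^ 2 * t * x * s * y :=
  A1.satisfiesIdentity.prod A1.satisfiesIdentity_mulOpposite
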